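/- There exists an absolute constant C > 0 with the following property. Let Δ > 0, let m, L be positive integers, and let w ∈ ℂ^m satisfy w_j ≠ 0 and Re(w_j) ≤ 0 for all j. Let x be a square-integrable random vector in ℝ^L, and let c ∈ ℂ^m be a random vector independent of x whose m real parts and m imaginary parts are 2m mutually independent centered Gaussian random variables of variance 1/2. Define y_L = ∑_{k=0}^{L−1} Re( ∑_{j=1}^m ((e^{Δ w_j} − 1)/w_j) · c_j · e^{Δ w_j (L−1−k)} ) · x_k. Then for every δ ∈ (0, 1), with probability at least 1 − δ over the draw of c, the conditional second moment satisfies E_x[y_L² | c] ≤ C · Δ² · m · L · λ_max(E[x xᵀ]) · (m + log(2/δ)). -/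

import Mathlib

/-!
Write `y_L = a(c) ⬝ᵥ x` with the kernel
`a(c)_k = Re ∑_j ((e^{Δ w_j} - 1) / w_j) c_j e^{Δ w_j (L-1-k)}`. Then `E_x[y_L² | c]` is the
quadratic form of the autocorrelation matrix at `a(c)`, hence at most `λ_max ‖a(c)‖²`.
Since `Re w_j ≤ 0`, both `|e^{Δ w_j} - 1| ≤ Δ |w_j|` and `|e^{Δ w_j n}| ≤ 1`, so
`|a(c)_k| ≤ Δ ∑_j |c_j|` and, by Cauchy–Schwarz, `‖a(c)‖² ≤ L Δ² m ∑_j |c_j|²`.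
Finally `∑_j |c_j|²` is a sum of `2m` squares of independent `N(0, 1/2)` variables, each with
`E[e^{X²/2}] = √2`; the Chernoff bound at `t = 1/2` gives
`P(∑_j |c_j|² ≥ 2 (m + log (2/δ))) ≤ e^{-m} 2^m δ / 2 ≤ δ`, so `C = 2` works.
-/

open MeasureTheory ProbabilityTheory Matrix

/-- The ZOH-discretized diagonal SSM output
`y_L = ∑_{k=0}^{L-1} Re(∑_{j=1}^m ((e^{Δ w_j} - 1)/w_j) c_j e^{Δ w_j (L-1-k)}) x_k`. -/
noncomputable def ssmOutput {m L : ℕ} (Δ : ℝ) (w : Fin m → ℂ) (c : Fin m → ℂ)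
    (x : Fin L → ℝ) : ℝ :=
  ∑ k : Fin L,
    (∑ j : Fin m, ((Complex.exp ((Δ : ℂ) * w j) - 1) / w j) * c j *
      Complex.exp ((Δ : ℂ) * w j * ((L - 1 - (k : ℕ) : ℕ) : ℂ))).re * x k

open scoped NNReal ComplexOrder

lemma Complex.norm_exp_sub_one_le_of_re_nonpos {z : ℂ} (hz : z.re ≤ 0) :
    ‖Complex.exp z - 1‖ ≤ ‖z‖ := by
  have hderiv : ∀ w ∈ {w : ℂ | w.re ≤ 0}, ‖deriv Complex.exp w‖ ≤ 1 := fun w hw => by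
    rw [Complex.deriv_exp, Complex.norm_exp, Real.exp_le_one_iff]
    exact hw
  simpa using (convex_halfSpace_re_le (0 : ℝ)).norm_image_sub_le_of_norm_deriv_le
    (fun w _ => Complex.differentiableAt_exp) hderiv (x := 0) (by simp) hz

namespace Matrix

variable {n 𝕜 : Type*} [Fintype n] [DecidableEq n] [RCLike 𝕜]

lemma IsHermitian.posSemidef_smul_one_sub {A : Matrix n n 𝕜} (hA : A.IsHermitian) {r : ℝ}
    (hr : ∀ i, hA.eigenvalues i ≤ r) : ((r : 𝕜) • (1 : Matrix n n 𝕜) - A).PosSemidef := by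
  have hdiag : ((r : 𝕜) • (1 : Matrix n n 𝕜) -
      diagonal (RCLike.ofReal ∘ hA.eigenvalues)).PosSemidef := by
    rw [smul_one_eq_diagonal, diagonal_sub]
    refine PosSemidef.diagonal fun i => ?_
    simp only [Pi.zero_apply, Function.comp_apply, ← RCLike.ofReal_sub, RCLike.ofReal_nonneg]
    linarith [hr i]
  have hspec : A = (hA.eigenvectorUnitary : Matrix n n 𝕜) *
      diagonal (RCLike.ofReal ∘ hA.eigenvalues) * star (hA.eigenvectorUnitary : Matrix n n 𝕜) :=
    hA.spectral_theorem.trans (Unitary.conjStarAlgAut_apply _ _)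
  have h := hdiag.mul_mul_conjTranspose_same (hA.eigenvectorUnitary : Matrix n n 𝕜)
  rwa [Matrix.mul_sub, Matrix.sub_mul, Matrix.mul_smul, Matrix.smul_mul, Matrix.mul_one,
    ← star_eq_conjTranspose, Unitary.mul_star_self_of_mem hA.eigenvectorUnitary.2, ← hspec] at h

lemma IsHermitian.dotProduct_mulVec_le_iSup_eigenvalues_mul {A : Matrix n n ℝ}
    (hA : A.IsHermitian) (a : n → ℝ) :
    a ⬝ᵥ A *ᵥ a ≤ (⨆ i, hA.eigenvalues i) * (a ⬝ᵥ a) := by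
  have h := (hA.posSemidef_smul_one_sub fun i =>
    le_ciSup (Set.finite_range hA.eigenvalues).bddAbove i).dotProduct_mulVec_nonneg a
  simp only [star_trivial, sub_mulVec, smul_mulVec, one_mulVec, dotProduct_sub,
    dotProduct_smul, smul_eq_mul] at h
  simpa using h

end Matrix

section Autocorrelation

variable {Ω ι : Type*} [MeasurableSpace Ω] {μ : Measure Ω} [Fintype ι] {x : Ω → ι → ℝ}

variable (μ x) in
noncomputable def autocorrelation : Matrix ι ι ℝ :=
  of fun i k => ∫ ω, x ω i * x ω k ∂μ

lemma integral_dotProduct_sq_eq_autocorrelation (hx : ∀ i, MemLp (fun ω => x ω i) 2 μ)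
    (a : ι → ℝ) : ∫ ω, (a ⬝ᵥ x ω) ^ 2 ∂μ = a ⬝ᵥ autocorrelation μ x *ᵥ a := by
  have hint : ∀ i k, Integrable (fun ω => a i * x ω i * (a k * x ω k)) μ := fun i k =>
    ((hx i).const_mul (a i)).integrable_mul ((hx k).const_mul (a k))
  simp_rw [sq, dotProduct, Finset.sum_mul_sum, mulVec, dotProduct, autocorrelation, of_apply,
    Finset.mul_sum]
  rw [integral_finsetSum _ fun i _ => integrable_finsetSum _ fun k _ => hint i k]
  refine Finset.sum_congr rfl fun i _ => ?_
  rw [integral_finsetSum _ fun k _ => hint i k]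
  refine Finset.sum_congr rfl fun k _ => ?_
  rw [mul_comm _ (a k), ← mul_assoc, ← integral_const_mul]
  congr 1 with ω
  ring

lemma posSemidef_autocorrelation (hx : ∀ i, MemLp (fun ω => x ω i) 2 μ) :
    (autocorrelation μ x).PosSemidef := by
  refine .of_dotProduct_mulVec_nonneg ?_ fun a => ?_
  · ext i k
    simp [autocorrelation, mul_comm]
  · rw [star_trivial, ← integral_dotProduct_sq_eq_autocorrelation hx]
    exact integral_nonneg fun ω => sq_nonneg _

end Autocorrelation

lemma integral_exp_mul_sq_gaussianReal {v : ℝ≥0} (hv : v ≠ 0) {t : ℝ} (ht : 2 * t * v < 1) :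
    ∫ x, Real.exp (t * x ^ 2) ∂gaussianReal 0 v = (√(1 - 2 * t * v))⁻¹ := by
  have hb : 0 < (2 * v : ℝ)⁻¹ - t := by
    rw [sub_pos, ← one_div, lt_div_iff₀ (by positivity)]
    linarith
  have hexp : ∀ x : ℝ, -(x - 0) ^ 2 / (2 * v) + t * x ^ 2 = -((2 * v : ℝ)⁻¹ - t) * x ^ 2 := by
    intro x
    field_simp
    ring
  rw [integral_gaussianReal_eq_integral_smul hv]
  simp_rw [gaussianPDFReal_def, smul_eq_mul, mul_assoc, ← Real.exp_add, hexp]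
  rw [integral_const_mul, integral_gaussian]
  have hquot : Real.pi / ((2 * v : ℝ)⁻¹ - t) = 2 * Real.pi * v / (1 - 2 * t * v) := by
    field_simp
  rw [hquot, Real.sqrt_div' _ (by linarith)]
  field_simp

lemma integrable_exp_mul_sq_gaussianReal {v : ℝ≥0} (hv : v ≠ 0) {t : ℝ} (ht : 2 * t * v < 1) :
    Integrable (fun x => Real.exp (t * x ^ 2)) (gaussianReal 0 v) :=
  .of_integral_ne_zero <| by
    rw [integral_exp_mul_sq_gaussianReal hv ht]
    exact inv_ne_zero (Real.sqrt_ne_zero'.2 (by linarith))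

lemma measureReal_sum_sq_ge_le_of_gaussianReal {Ω ι : Type*} [MeasurableSpace Ω] {μ : Measure Ω}
    [Fintype ι] {X : ι → Ω → ℝ} {v : ℝ≥0} (hindep : iIndepFun X μ) (hmeas : ∀ i, Measurable (X i))
    (hlaw : ∀ i, μ.map (X i) = gaussianReal 0 v) (hv : v ≠ 0) {t : ℝ} (ht₀ : 0 ≤ t)
    (ht : 2 * t * v < 1) (s : ℝ) :
    μ.real {ω | s ≤ ∑ i, X i ω ^ 2} ≤
      Real.exp (-t * s) * (√(1 - 2 * t * v))⁻¹ ^ Fintype.card ι := by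
  have := hindep.isProbabilityMeasure
  have hsq_indep : iIndepFun (fun i ω => X i ω ^ 2) μ :=
    hindep.comp (fun _ y => y ^ 2) fun _ => measurable_id.pow_const 2
  have hsq_meas : ∀ i, Measurable fun ω => X i ω ^ 2 := fun i => (hmeas i).pow_const 2
  have hg : Measurable fun y : ℝ => Real.exp (t * y ^ 2) := by fun_prop
  have hint : ∀ i, Integrable (fun ω => Real.exp (t * X i ω ^ 2)) μ := fun i => by
    have h := integrable_exp_mul_sq_gaussianReal hv ht
    rw [← hlaw i] at h
    exact (integrable_map_measure hg.aestronglyMeasurable (hmeas i).aemeasurable).mp h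
  have hmgf : ∀ i, mgf (fun ω => X i ω ^ 2) μ t = (√(1 - 2 * t * v))⁻¹ := fun i => by
    rw [mgf, ← integral_exp_mul_sq_gaussianReal hv ht, ← hlaw i,
      integral_map (hmeas i).aemeasurable hg.aestronglyMeasurable]
  calc μ.real {ω | s ≤ ∑ i, X i ω ^ 2}
      = μ.real {ω | s ≤ (∑ i, fun ω => X i ω ^ 2) ω} := by simp only [Finset.sum_apply]
    _ ≤ Real.exp (-t * s) * mgf (∑ i, fun ω => X i ω ^ 2) μ t :=
        measure_ge_le_exp_mul_mgf s ht₀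
          (hsq_indep.integrable_exp_mul_sum hsq_meas fun i _ => hint i)
    _ = Real.exp (-t * s) * (√(1 - 2 * t * v))⁻¹ ^ Fintype.card ι := by
        rw [hsq_indep.mgf_sum hsq_meas, Finset.prod_congr rfl fun i _ => hmgf i,
          Finset.prod_const, Finset.card_univ]

lemma measureReal_sum_sq_ge_le_of_gaussianReal_half {Ω ι : Type*} [MeasurableSpace Ω]
    {μ : Measure Ω} [Fintype ι] {X : ι → Ω → ℝ} (hindep : iIndepFun X μ)
    (hmeas : ∀ i, Measurable (X i)) (hlaw : ∀ i, μ.map (X i) = gaussianReal 0 (1 / 2))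
    {δ : ℝ} (hδ : 0 < δ) :
    μ.real {ω | Fintype.card ι + 2 * Real.log (1 / δ) ≤ ∑ i, X i ω ^ 2} ≤ δ := by
  refine (measureReal_sum_sq_ge_le_of_gaussianReal hindep hmeas hlaw (by norm_num)
    (t := 1 / 2) (by norm_num) (by norm_num) _).trans ?_
  have hmgf : (√(1 - 2 * (1 / 2) * ((1 / 2 : ℝ≥0) : ℝ)))⁻¹ = √2 := by
    rw [← Real.sqrt_inv]
    norm_num
  have hsqrt : √2 ≤ Real.exp (1 / 2) := by
    rw [Real.sqrt_le_left (by positivity), ← Real.exp_nat_mul]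
    norm_num
    linarith [Real.add_one_le_exp (1 : ℝ)]
  rw [hmgf, one_div δ, Real.log_inv,
    show -(1 / 2) * (Fintype.card ι + 2 * -Real.log δ) = Real.log δ - Fintype.card ι * (1 / 2)
      by ring, Real.exp_sub, Real.exp_log hδ, Real.exp_nat_mul, div_mul_eq_mul_div, mul_div_assoc,
    ← div_pow]
  exact mul_le_of_le_one_right hδ.le
    (pow_le_one₀ (by positivity) ((div_le_one (by positivity)).2 hsqrt))

noncomputable def ssmKernel {m : ℕ} (L : ℕ) (Δ : ℝ) (w c : Fin m → ℂ) (k : Fin L) : ℝ :=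
  (∑ j : Fin m, ((Complex.exp ((Δ : ℂ) * w j) - 1) / w j) * c j *
    Complex.exp ((Δ : ℂ) * w j * ((L - 1 - (k : ℕ) : ℕ) : ℂ))).re

lemma ssmOutput_eq_ssmKernel_dotProduct {m L : ℕ} (Δ : ℝ) (w c : Fin m → ℂ) (x : Fin L → ℝ) :
    ssmOutput Δ w c x = ssmKernel L Δ w c ⬝ᵥ x :=
  rfl

lemma norm_exp_mul_sub_one_div_le {Δ : ℝ} (hΔ : 0 ≤ Δ) {w : ℂ} (hw : w.re ≤ 0) :
    ‖(Complex.exp (Δ * w) - 1) / w‖ ≤ Δ := by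
  rcases eq_or_ne w 0 with rfl | hw₀
  · simpa using hΔ
  rw [norm_div, div_le_iff₀ (norm_pos_iff.2 hw₀)]
  calc ‖Complex.exp (Δ * w) - 1‖ ≤ ‖(Δ : ℂ) * w‖ :=
        Complex.norm_exp_sub_one_le_of_re_nonpos <| by
          simpa using mul_nonpos_of_nonneg_of_nonpos hΔ hw
    _ = Δ * ‖w‖ := by rw [norm_mul, Complex.norm_real, Real.norm_of_nonneg hΔ]

section Kernel

variable {m L : ℕ} {Δ : ℝ} {w : Fin m → ℂ}

lemma abs_ssmKernel_le (hΔ : 0 ≤ Δ) (hw : ∀ j, (w j).re ≤ 0) (c : Fin m → ℂ) (k : Fin L) :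
    |ssmKernel L Δ w c k| ≤ Δ * ∑ j, ‖c j‖ := by
  have hdecay : ∀ j, ‖Complex.exp ((Δ : ℂ) * w j * ((L - 1 - (k : ℕ) : ℕ) : ℂ))‖ ≤ 1 := fun j => by
    rw [Complex.norm_exp, Real.exp_le_one_iff]
    simpa using mul_nonpos_of_nonpos_of_nonneg (mul_nonpos_of_nonneg_of_nonpos hΔ (hw j))
      (Nat.cast_nonneg (L - 1 - k))
  calc |ssmKernel L Δ w c k|
      ≤ ∑ j, ‖((Complex.exp ((Δ : ℂ) * w j) - 1) / w j) * c j *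
          Complex.exp ((Δ : ℂ) * w j * ((L - 1 - (k : ℕ) : ℕ) : ℂ))‖ :=
        (Complex.abs_re_le_norm _).trans (norm_sum_le _ _)
    _ ≤ ∑ j, Δ * ‖c j‖ := by
        gcongr with j
        rw [norm_mul, norm_mul]
        calc _ ≤ Δ * ‖c j‖ * 1 := by
              gcongr
              exacts [norm_exp_mul_sub_one_div_le hΔ (hw j), hdecay j]
          _ = Δ * ‖c j‖ := mul_one _
    _ = Δ * ∑ j, ‖c j‖ := Finset.mul_sum _ _ _ |>.symm

lemma ssmKernel_dotProduct_self_le (hΔ : 0 ≤ Δ) (hw : ∀ j, (w j).re ≤ 0) (c : Fin m → ℂ) :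
    ssmKernel L Δ w c ⬝ᵥ ssmKernel L Δ w c ≤ L * Δ ^ 2 * m * ∑ j, ‖c j‖ ^ 2 := by
  have hk : ∀ k : Fin L, ssmKernel L Δ w c k * ssmKernel L Δ w c k ≤
      Δ ^ 2 * (m * ∑ j, ‖c j‖ ^ 2) := fun k => by
    calc ssmKernel L Δ w c k * ssmKernel L Δ w c k = |ssmKernel L Δ w c k| ^ 2 := by
          rw [sq_abs, sq]
      _ ≤ (Δ * ∑ j, ‖c j‖) ^ 2 := by gcongr; exact abs_ssmKernel_le hΔ hw c k
      _ ≤ Δ ^ 2 * (m * ∑ j, ‖c j‖ ^ 2) := by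
          rw [mul_pow]
          gcongr
          simpa using sq_sum_le_card_mul_sum_sq (s := Finset.univ) (f := fun j => ‖c j‖)
  calc ssmKernel L Δ w c ⬝ᵥ ssmKernel L Δ w c ≤ ∑ _k : Fin L, Δ ^ 2 * (m * ∑ j, ‖c j‖ ^ 2) :=
        Finset.sum_le_sum fun k _ => hk k
    _ = L * Δ ^ 2 * m * ∑ j, ‖c j‖ ^ 2 := by simp; ring

end Kernel

lemma integral_ssmOutput_sq_le {Ω : Type*} [MeasurableSpace Ω] {μ : Measure Ω} {m L : ℕ}
    {x : Ω → Fin L → ℝ} (hx : ∀ i, MemLp (fun ω => x ω i) 2 μ)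
    (hM : (autocorrelation μ x).IsHermitian) {Δ : ℝ} (hΔ : 0 ≤ Δ)
    {w : Fin m → ℂ} (hw : ∀ j, (w j).re ≤ 0) {c : Fin m → ℂ} {S : ℝ}
    (hS : ∑ j, ‖c j‖ ^ 2 ≤ S) :
    ∫ ω, ssmOutput Δ w c (x ω) ^ 2 ∂μ ≤ Δ ^ 2 * m * L * (⨆ i, hM.eigenvalues i) * S := by
  have hlam : 0 ≤ ⨆ i, hM.eigenvalues i :=
    Real.iSup_nonneg (posSemidef_autocorrelation hx).eigenvalues_nonneg
  set a := ssmKernel L Δ w c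
  calc ∫ ω, ssmOutput Δ w c (x ω) ^ 2 ∂μ = a ⬝ᵥ autocorrelation μ x *ᵥ a := by
        simp_rw [ssmOutput_eq_ssmKernel_dotProduct]
        exact integral_dotProduct_sq_eq_autocorrelation hx a
    _ ≤ (⨆ i, hM.eigenvalues i) * (a ⬝ᵥ a) := hM.dotProduct_mulVec_le_iSup_eigenvalues_mul a
    _ ≤ (⨆ i, hM.eigenvalues i) * (L * Δ ^ 2 * m * S) := by
        gcongr
        exact (ssmKernel_dotProduct_self_le hΔ hw c).trans (by gcongr)
    _ = Δ ^ 2 * m * L * (⨆ i, hM.eigenvalues i) * S := by ring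

lemma sum_norm_sq_eq_sum_re_im_sq {ι : Type*} [Fintype ι] (c : ι → ℂ) :
    ∑ j, ‖c j‖ ^ 2 = ∑ i, Sum.elim (fun j => (c j).re) (fun j => (c j).im) i ^ 2 := by
  simp only [Fintype.sum_sum_type, Sum.elim_inl, Sum.elim_inr, ← Finset.sum_add_distrib,
    Complex.sq_norm, Complex.normSq_apply, ← sq]

/-- There is an absolute constant `C > 0` such that, for the ZOH-discretized
SSM with timescale `Δ > 0`, state vector `w` with nonzero entries and nonpositive real parts,
square-integrable random input `x ∈ ℝ^L`, and an independent random read-out `c` whose `2m`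
real and imaginary parts are mutually independent centered Gaussians of variance `1/2`: for
every `δ ∈ (0,1)`, with probability at least `1 - δ` over `c`, the conditional second moment
`E_x[y_L² | c] = ∫ (y_L(c, x ω'))² dμ(ω')` is at most
`C Δ² m L λ_max(E[x xᵀ]) (m + log(2/δ))`. -/
theorem stmt_5 :
    ∃ C : ℝ, 0 < C ∧
      ∀ (Ω : Type) [MeasurableSpace Ω] (μ : Measure Ω) [IsProbabilityMeasure μ]
        (Δ : ℝ), 0 < Δ → ∀ (m L : ℕ), 0 < m → 0 < L →
        ∀ (w : Fin m → ℂ), (∀ j, w j ≠ 0) → (∀ j, (w j).re ≤ 0) →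
        ∀ (x : Ω → Fin L → ℝ), Measurable x →
        (∀ i, MemLp (fun ω => x ω i) 2 μ) →
        ∀ (c : Ω → Fin m → ℂ), Measurable c →
        iIndepFun
          (fun (i : Fin m ⊕ Fin m) (ω : Ω) =>
            Sum.elim (fun j => (c ω j).re) (fun j => (c ω j).im) i) μ →
        (∀ i : Fin m ⊕ Fin m,
          Measure.map (fun ω => Sum.elim (fun j => (c ω j).re) (fun j => (c ω j).im) i) μ
            = gaussianReal 0 (1 / 2 : NNReal)) →
        IndepFun c x μ →
        ∀ (hHerm : (Matrix.of fun i k : Fin L => ∫ ω, x ω i * x ω k ∂μ).IsHermitian)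
          (δ : ℝ), 0 < δ → δ < 1 →
        1 - δ ≤ (μ {ω | ∫ ω', (ssmOutput Δ w (c ω) (x ω')) ^ 2 ∂μ
            ≤ C * Δ ^ 2 * (m : ℝ) * (L : ℝ) * (⨆ i, hHerm.eigenvalues i) *
              ((m : ℝ) + Real.log (2 / δ))}).toReal := by
  refine ⟨2, two_pos, ?_⟩
  intro Ω _ μ _ Δ hΔ m L _ _ w _ hw x _ hx c hc hindep hgauss _ hHerm δ hδ _
  set G : Fin m ⊕ Fin m → Ω → ℝ :=
    fun i ω => Sum.elim (fun j => (c ω j).re) (fun j => (c ω j).im) i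
  set s : ℝ := 2 * (m + Real.log (2 / δ))
  have hG : ∀ i, Measurable (G i) := by
    rintro (j | j)
    · exact Complex.measurable_re.comp ((measurable_pi_apply j).comp hc)
    · exact Complex.measurable_im.comp ((measurable_pi_apply j).comp hc)
  have hthr : (Fintype.card (Fin m ⊕ Fin m) : ℝ) + 2 * Real.log (1 / (δ / 2)) = s := by
    rw [Fintype.card_sum, Fintype.card_fin, one_div_div]
    push_cast
    ring
  have htail : μ.real {ω | s ≤ ∑ i, G i ω ^ 2} ≤ δ := by
    have h := measureReal_sum_sq_ge_le_of_gaussianReal_half hindep hG hgauss (half_pos hδ)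
    rw [hthr] at h
    linarith
  calc 1 - δ ≤ 1 - μ.real {ω | s ≤ ∑ i, G i ω ^ 2} := by linarith
    _ = μ.real {ω | s ≤ ∑ i, G i ω ^ 2}ᶜ :=
        (probReal_compl_eq_one_sub (measurableSet_le measurable_const (by fun_prop))).symm
    _ ≤ _ := measureReal_mono fun ω (hω : ¬ s ≤ ∑ i, G i ω ^ 2) => ?_
  have hS : ∑ j, ‖c ω j‖ ^ 2 ≤ s := by
    rw [sum_norm_sq_eq_sum_re_im_sq]
    exact (not_le.1 hω).le
  calc _ ≤ Δ ^ 2 * m * L * (⨆ i, hHerm.eigenvalues i) * s :=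
        integral_ssmOutput_sq_le hx hHerm hΔ.le hw hS
    _ = _ := by ring
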